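/- arXiv:1505.06463 — 4 statements merged into one kernel-verified Lean document; each statement's English description precedes it below -/
import Mathlib

section
/- Let α₂ > 0, α₁, α₀ be real numbers. All roots of the cubic polynomial σ³ + α₂σ² + α₁σ + α₀ have negative real part if and only if α₀ > 0, α₁ > 0, and α₁α₂ - α₀ > 0. -/
/-!
A real cubic has a real root `r`, hence factors as `(X - r)(X² + βX + γ)` with `β, γ` real.
The roots of the quadratic factor lie in the open left half-plane iff `β > 0` and `γ > 0`:
the two roots have real parts summing to `-β`, a nonpositive `γ` produces a nonnegative real
root, and conversely a root off the real axis has real part `-β / 2`. In terms of `r, β, γ` the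
Hurwitz quantities are `α₀ = -rγ`, `α₁ = γ - βr` and `α₁α₂ - α₀ = β(γ - βr + r²)`, and these are
all positive iff `r < 0`, `β > 0` and `γ > 0`.
-/

open Complex

lemma exists_cubic_root (a b c : ℝ) : ∃ r : ℝ, r ^ 3 + a * r ^ 2 + b * r + c = 0 := by
  set M := 1 + |a| + |b| + |c|
  have ha := abs_le.1 (show |a| ≤ M - 1 by linarith [abs_nonneg b, abs_nonneg c])
  have hb := abs_le.1 (show |b| ≤ M - 1 by linarith [abs_nonneg a, abs_nonneg c])
  have hc := abs_le.1 (show |c| ≤ M - 1 by linarith [abs_nonneg a, abs_nonneg b])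
  have hM1 : 1 ≤ M := by linarith
  have hleft : (-M) ^ 3 + a * (-M) ^ 2 + b * (-M) + c ≤ 0 := by nlinarith
  have hright : 0 ≤ M ^ 3 + a * M ^ 2 + b * M + c := by nlinarith
  obtain ⟨r, -, hr⟩ := intermediate_value_Icc (by linarith : -M ≤ M)
    (by fun_prop : ContinuousOn (fun x : ℝ => x ^ 3 + a * x ^ 2 + b * x + c) (Set.Icc (-M) M))
    ⟨hleft, hright⟩
  exact ⟨r, hr⟩

/-- `β - r`, `γ - βr`, `-rγ` are the coefficients of `(X - r)(X² + βX + γ)`. -/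
lemma exists_linear_mul_quadratic_eq_cubic (a b c : ℝ) :
    ∃ r β γ : ℝ, a = β - r ∧ b = γ - β * r ∧ c = -(r * γ) := by
  obtain ⟨r, hr⟩ := exists_cubic_root a b c
  exact ⟨r, a + r, b + a * r + r ^ 2, by ring, by ring, by linear_combination hr⟩

lemma quadratic_roots_re_neg_iff (β γ : ℝ) :
    (∀ z : ℂ, z ^ 2 + β * z + γ = 0 → z.re < 0) ↔ 0 < β ∧ 0 < γ := by
  constructor
  · intro h
    constructor
    · obtain ⟨s, hs⟩ := IsAlgClosed.exists_eq_mul_self ((β : ℂ) ^ 2 - 4 * γ)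
      have h₁ := h ((-β + s) / 2) (by linear_combination -hs / 4)
      have h₂ := h ((-β - s) / 2) (by linear_combination -hs / 4)
      simp only [div_ofNat_re, add_re, sub_re, neg_re, ofReal_re] at h₁ h₂
      linarith
    · by_contra! hγ
      set s := √(β ^ 2 - 4 * γ)
      have hs : s ^ 2 = β ^ 2 - 4 * γ := Real.sq_sqrt (by nlinarith)
      have hβs : β ≤ s := by nlinarith [Real.sqrt_nonneg (β ^ 2 - 4 * γ)]
      have hroot : ((-β + s) / 2) ^ 2 + β * ((-β + s) / 2) + γ = 0 := by
        linear_combination hs / 4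
      have := h ((-β + s) / 2 : ℝ) (by exact_mod_cast hroot)
      rw [ofReal_re] at this
      linarith
  · rintro ⟨hβ, hγ⟩ z hz
    by_contra! hre
    have hre_eq := congrArg re hz
    have him_eq := congrArg im hz
    simp only [sq, add_re, add_im, mul_re, mul_im, ofReal_re, ofReal_im, zero_re, zero_im,
      zero_mul, sub_zero, add_zero] at hre_eq him_eq
    have him : z.im = 0 := by nlinarith
    simp only [him, mul_zero, sub_zero] at hre_eq
    nlinarith

lemma hurwitz_inequalities_iff (r β γ : ℝ) :
    (r < 0 ∧ 0 < β ∧ 0 < γ) ↔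
      (0 < -(r * γ) ∧ 0 < γ - β * r ∧ 0 < (γ - β * r) * (β - r) - -(r * γ)) := by
  have hkey : (γ - β * r) * (β - r) - -(r * γ) = β * (γ - β * r + r ^ 2) := by ring
  rw [hkey]
  constructor
  · rintro ⟨hr, hβ, hγ⟩
    have hb : 0 < γ - β * r := by nlinarith
    exact ⟨by nlinarith, hb, by positivity⟩
  · rintro ⟨hc, hb, hab⟩
    have hβ : 0 < β := pos_of_mul_pos_left hab (by positivity)
    have hr : r < 0 := by
      by_contra! hr
      nlinarith
    exact ⟨hr, hβ, by nlinarith⟩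

theorem routh_hurwitz_cubic_general (α₂ α₁ α₀ : ℝ) :
    (∀ σ : ℂ, σ ^ 3 + (α₂ : ℂ) * σ ^ 2 + (α₁ : ℂ) * σ + (α₀ : ℂ) = 0 → σ.re < 0) ↔
      (0 < α₀ ∧ 0 < α₁ ∧ 0 < α₁ * α₂ - α₀) := by
  obtain ⟨r, β, γ, rfl, rfl, rfl⟩ := exists_linear_mul_quadratic_eq_cubic α₂ α₁ α₀
  have hfactor (σ : ℂ) :
      σ ^ 3 + ((β - r : ℝ) : ℂ) * σ ^ 2 + ((γ - β * r : ℝ) : ℂ) * σ + ((-(r * γ) : ℝ) : ℂ) =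
        (σ - r) * (σ ^ 2 + β * σ + γ) := by
    push_cast
    ring
  simp only [hfactor, mul_eq_zero, sub_eq_zero, or_imp, forall_and, forall_eq, ofReal_re]
  rw [quadratic_roots_re_neg_iff, hurwitz_inequalities_iff]

/-- Routh–Hurwitz criterion for a monic real cubic: all complex roots of
`σ³ + α₂σ² + α₁σ + α₀` (with `α₂ > 0`) have negative real part iff
`α₀ > 0`, `α₁ > 0` and `α₁α₂ - α₀ > 0`. -/
theorem routh_hurwitz_cubic (α₂ α₁ α₀ : ℝ) (hα₂ : 0 < α₂) :
    (∀ σ : ℂ, σ ^ 3 + (α₂ : ℂ) * σ ^ 2 + (α₁ : ℂ) * σ + (α₀ : ℂ) = 0 → σ.re < 0) ↔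
      (0 < α₀ ∧ 0 < α₁ ∧ 0 < α₁ * α₂ - α₀) :=
  routh_hurwitz_cubic_general α₂ α₁ α₀
end

section
/- Let d₁, d₂, λ, ξ, v̄, ū, k, L > 0 with d₁ ≥ d₂ and 0 < ξ. Set m = (kπ/L)². Then J₁ + J₂ < 0, where J₁ = (d₁d₂(m+λ) - ξd₁v̄)((d₁+1)m+λ) + ξd₂v̄((d₂+1)m+λ) and J₂ = -(d₁+d₂)²d₂ m(m+λ) - (d₁+d₂)d₂(m+λ)² - (d₁+d₂)d₁d₂² m². -/
/-!
Collecting the terms in `ξ v̄`, `J₁ + J₂` splits into `-ξ v̄ (d₁ - d₂)((d₁ + d₂ + 1) m + λ)`,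
which is `≤ 0` because `d₁ ≥ d₂`, and `-d₂²` times a quantity that is positive because
`m ≥ 0` and `λ > 0`; the splitting rests on `d₁² - (d₁ + d₂)² = -d₂ (2 d₁ + d₂)` and
`d₁ - (d₁ + d₂) = -d₂`.
-/

lemma J_sum_eq (d₁ d₂ lam ξ vbar m : ℝ) :
    (d₁ * d₂ * (m + lam) - ξ * d₁ * vbar) * ((d₁ + 1) * m + lam) +
        ξ * d₂ * vbar * ((d₂ + 1) * m + lam) +
      (-(d₁ + d₂) ^ 2 * d₂ * m * (m + lam) - (d₁ + d₂) * d₂ * (m + lam) ^ 2 -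
        (d₁ + d₂) * d₁ * d₂ ^ 2 * m ^ 2) =
    -(ξ * vbar * ((d₁ - d₂) * ((d₁ + d₂ + 1) * m + lam))) -
      d₂ ^ 2 * ((2 * d₁ + d₂) * m * (m + lam) + (m + lam) ^ 2 + (d₁ + d₂) * d₁ * m ^ 2) := by
  ring

theorem J_sum_neg_case1_general (d₁ d₂ lam ξ vbar k L m J₁ J₂ : ℝ)
    (hd₂ : 0 < d₂) (hlam : 0 < lam) (hξ : 0 < ξ) (hv : 0 < vbar)
    (hd : d₂ ≤ d₁)
    (hm : m = (k * Real.pi / L) ^ 2)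
    (hJ₁ : J₁ = (d₁ * d₂ * (m + lam) - ξ * d₁ * vbar) * ((d₁ + 1) * m + lam) +
      ξ * d₂ * vbar * ((d₂ + 1) * m + lam))
    (hJ₂ : J₂ = -(d₁ + d₂) ^ 2 * d₂ * m * (m + lam) - (d₁ + d₂) * d₂ * (m + lam) ^ 2 -
      (d₁ + d₂) * d₁ * d₂ ^ 2 * m ^ 2) :
    J₁ + J₂ < 0 := by
  have hm₀ : 0 ≤ m := hm ▸ sq_nonneg _
  have hd₁ : 0 < d₁ := hd₂.trans_le hd
  have hchemotaxis : 0 ≤ ξ * vbar * ((d₁ - d₂) * ((d₁ + d₂ + 1) * m + lam)) :=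
    mul_nonneg (by positivity) (mul_nonneg (sub_nonneg.2 hd) (by positivity))
  have hdiffusion :
      0 < d₂ ^ 2 * ((2 * d₁ + d₂) * m * (m + lam) + (m + lam) ^ 2 + (d₁ + d₂) * d₁ * m ^ 2) := by
    positivity
  rw [hJ₁, hJ₂, J_sum_eq]
  linarith

/-- Case 1 (`d₁ ≥ d₂`) in the proof that `χ_k^S < χ_k^H` for the growth-free system:
with `m = (kπ/L)²`, the quantity `J₁ + J₂` is negative. -/
theorem J_sum_neg_case1 (d₁ d₂ lam ξ vbar ubar k L m J₁ J₂ : ℝ)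
    (hd₁ : 0 < d₁) (hd₂ : 0 < d₂) (hlam : 0 < lam) (hξ : 0 < ξ) (hv : 0 < vbar)
    (hu : 0 < ubar) (hk : 0 < k) (hL : 0 < L) (hd : d₂ ≤ d₁)
    (hm : m = (k * Real.pi / L) ^ 2)
    (hJ₁ : J₁ = (d₁ * d₂ * (m + lam) - ξ * d₁ * vbar) * ((d₁ + 1) * m + lam) +
      ξ * d₂ * vbar * ((d₂ + 1) * m + lam))
    (hJ₂ : J₂ = -(d₁ + d₂) ^ 2 * d₂ * m * (m + lam) - (d₁ + d₂) * d₂ * (m + lam) ^ 2 -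
      (d₁ + d₂) * d₁ * d₂ ^ 2 * m ^ 2) :
    J₁ + J₂ < 0 :=
  J_sum_neg_case1_general d₁ d₂ lam ξ vbar k L m J₁ J₂ hd₂ hlam hξ hv hd hm hJ₁ hJ₂
end

section
/- Let d₁, d₂, λ, v̄, k, L > 0 with d₁ < d₂, and suppose 0 < ξ < d₂((kπ/L)² + λ)/v̄. Set m = (kπ/L)². Then J₁ + J₂ < 0, where J₁ = (d₁d₂(m+λ) - ξd₁v̄)((d₁+1)m+λ) + ξd₂v̄((d₂+1)m+λ) and J₂ = -(d₁+d₂)²d₂ m(m+λ) - (d₁+d₂)d₂(m+λ)² - (d₁+d₂)d₁d₂² m². -/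
/-!
Writing `Aᵢ = (dᵢ + 1) m + λ`, the term `J₁` is affine in `ξ v̄` with slope `d₂A₂ - d₁A₁ > 0`, so
the bound `ξ v̄ < d₂(m + λ)` gives `J₁ < d₂²(m + λ)A₂`. Its two terms `d₂³m(m + λ)` and
`d₂²(m + λ)²` are dominated by the first two terms of `-J₂`, the second strictly, since
`d₂ < d₁ + d₂`.
-/

lemma mul_affine_lt_mul_affine {d₁ d₂ m lam : ℝ} (hd₁ : 0 ≤ d₁) (hd : d₁ < d₂) (hm : 0 ≤ m)
    (hlam : 0 < lam) :
    d₁ * ((d₁ + 1) * m + lam) < d₂ * ((d₂ + 1) * m + lam) := by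
  have hd₂ : 0 < d₂ := hd₁.trans_lt hd
  have hfactor : 0 < (d₂ - d₁) * ((d₁ + d₂ + 1) * m + lam) :=
    mul_pos (sub_pos.mpr hd) (by positivity)
  linarith

lemma J₁_lt_of_mul_lt {d₁ d₂ m lam ξ vbar : ℝ} (hd₁ : 0 ≤ d₁) (hd : d₁ < d₂) (hm : 0 ≤ m)
    (hlam : 0 < lam) (hξ : ξ * vbar < d₂ * (m + lam)) :
    (d₁ * d₂ * (m + lam) - ξ * d₁ * vbar) * ((d₁ + 1) * m + lam) +
      ξ * d₂ * vbar * ((d₂ + 1) * m + lam) < d₂ ^ 2 * (m + lam) * ((d₂ + 1) * m + lam) := by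
  have hslope := sub_pos.mpr (mul_affine_lt_mul_affine hd₁ hd hm hlam)
  linear_combination mul_lt_mul_of_pos_right hξ hslope

lemma add_J₂_neg {d₁ d₂ m lam : ℝ} (hd₁ : 0 < d₁) (hd₂ : 0 < d₂) (hm : 0 ≤ m) (hlam : 0 < lam) :
    d₂ ^ 2 * (m + lam) * ((d₂ + 1) * m + lam) +
      (-(d₁ + d₂) ^ 2 * d₂ * m * (m + lam) - (d₁ + d₂) * d₂ * (m + lam) ^ 2 -
        (d₁ + d₂) * d₁ * d₂ ^ 2 * m ^ 2) < 0 := by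
  have hpos :
      0 < d₁ * d₂ * ((d₁ + 2 * d₂) * m * (m + lam) + (m + lam) ^ 2 + (d₁ + d₂) * d₂ * m ^ 2) := by
    positivity
  linear_combination hpos

theorem J_sum_neg_case2_general (d₁ d₂ lam ξ vbar k L m J₁ J₂ : ℝ)
    (hd₁ : 0 < d₁) (hd₂ : 0 < d₂) (hlam : 0 < lam) (hv : 0 < vbar)
    (hd : d₁ < d₂)
    (hm : m = (k * Real.pi / L) ^ 2)
    (hξ' : ξ < d₂ * ((k * Real.pi / L) ^ 2 + lam) / vbar)
    (hJ₁ : J₁ = (d₁ * d₂ * (m + lam) - ξ * d₁ * vbar) * ((d₁ + 1) * m + lam) +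
      ξ * d₂ * vbar * ((d₂ + 1) * m + lam))
    (hJ₂ : J₂ = -(d₁ + d₂) ^ 2 * d₂ * m * (m + lam) - (d₁ + d₂) * d₂ * (m + lam) ^ 2 -
      (d₁ + d₂) * d₁ * d₂ ^ 2 * m ^ 2) :
    J₁ + J₂ < 0 := by
  have hm0 : 0 ≤ m := hm ▸ sq_nonneg _
  have hξv : ξ * vbar < d₂ * (m + lam) := (lt_div_iff₀ hv).mp (hm ▸ hξ')
  rw [hJ₁, hJ₂]
  linarith [J₁_lt_of_mul_lt hd₁.le hd hm0 hlam hξv, add_J₂_neg hd₁ hd₂ hm0 hlam]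

/-- Case 2 (`d₁ < d₂`) in the proof that `χ_k^S < χ_k^H` for the growth-free system:
with `m = (kπ/L)²` and `0 < ξ < d₂(m+λ)/v̄`, the quantity `J₁ + J₂` is negative. -/
theorem J_sum_neg_case2 (d₁ d₂ lam ξ vbar k L m J₁ J₂ : ℝ)
    (hd₁ : 0 < d₁) (hd₂ : 0 < d₂) (hlam : 0 < lam) (hv : 0 < vbar)
    (hk : 0 < k) (hL : 0 < L) (hd : d₁ < d₂)
    (hm : m = (k * Real.pi / L) ^ 2)
    (hξ : 0 < ξ) (hξ' : ξ < d₂ * ((k * Real.pi / L) ^ 2 + lam) / vbar)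
    (hJ₁ : J₁ = (d₁ * d₂ * (m + lam) - ξ * d₁ * vbar) * ((d₁ + 1) * m + lam) +
      ξ * d₂ * vbar * ((d₂ + 1) * m + lam))
    (hJ₂ : J₂ = -(d₁ + d₂) ^ 2 * d₂ * m * (m + lam) - (d₁ + d₂) * d₂ * (m + lam) ^ 2 -
      (d₁ + d₂) * d₁ * d₂ ^ 2 * m ^ 2) :
    J₁ + J₂ < 0 :=
  J_sum_neg_case2_general d₁ d₂ lam ξ vbar k L m J₁ J₂ hd₁ hd₂ hlam hv hd hm hξ' hJ₁ hJ₂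
end

section
/- Let d₁, d₂, λ, ū, v̄, k, L > 0 and 0 < ξ < d₂((kπ/L)²+λ)/v̄. Define m = (kπ/L)², χ_k^S = (d₁d₂(m+λ) - ξd₁v̄)/(d₂ū), A₁ = m+λ, A₂ = (d₁+d₂)m, A₃ = d₁d₂m², B₁ = (d₁+1)ūm² + λūm, B₂ = (d₂+1)v̄m² + λv̄m, and χ_k^H = (A₁A₂² + A₁²A₂ + A₂A₃ - ξB₂)/B₁. Then χ_k^S < χ_k^H. -/
/-!
Clearing the (positive) denominators, `χ_k^H - χ_k^S` becomes an affine function of `ξ`, so it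
suffices to check its sign at the two ends of the admissible range `0 ≤ ξ ≤ d₂ (m + λ) / v̄`.
At `ξ = 0` and at `ξ = d₂ (m + λ) / v̄` (where `χ_k^S = 0`) the claim reduces to the same
inequality `d A₁ m ((d + 1) m + λ) < A₁A₂² + A₁²A₂ + A₂A₃`, for `d = d₁` resp. `d = d₂`;
it holds because `A₁A₂² + A₁²A₂ + A₂A₃` is symmetric in `d₁, d₂` and expands into the left side
plus positive terms.
-/

lemma pos_of_affine_pos_of_mem_Icc {a b c₀ c₁ x : ℝ} (hx : x ∈ Set.Icc a b)
    (ha : 0 < c₀ + c₁ * a) (hb : 0 < c₀ + c₁ * b) : 0 < c₀ + c₁ * x := by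
  rcases le_total 0 c₁ with hc | hc
  · nlinarith [mul_le_mul_of_nonneg_left hx.1 hc]
  · nlinarith [mul_le_mul_of_nonpos_left hx.2 hc]

/-- `A₁A₂² + A₁²A₂ + A₂A₃` for `A₁ = m + λ`, `A₂ = (d₁ + d₂) m`, `A₃ = d₁ d₂ m²`. -/
def hopfNumerator (d₁ d₂ m lam : ℝ) : ℝ :=
  (m + lam) * ((d₁ + d₂) * m) ^ 2 + (m + lam) ^ 2 * ((d₁ + d₂) * m)
    + (d₁ + d₂) * m * (d₁ * d₂ * m ^ 2)

lemma hopfNumerator_comm (d₁ d₂ m lam : ℝ) :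
    hopfNumerator d₁ d₂ m lam = hopfNumerator d₂ d₁ m lam := by
  unfold hopfNumerator
  ring

lemma mul_lt_hopfNumerator {d₁ d₂ m lam : ℝ} (hd₁ : 0 < d₁) (hd₂ : 0 < d₂) (hm : 0 < m)
    (hlam : 0 < lam) :
    d₁ * (m + lam) * m * ((d₁ + 1) * m + lam) < hopfNumerator d₁ d₂ m lam := by
  have hgap : hopfNumerator d₁ d₂ m lam - d₁ * (m + lam) * m * ((d₁ + 1) * m + lam)
      = (m + lam) * m ^ 2 * d₂ * (2 * d₁ + d₂) + (m + lam) ^ 2 * m * d₂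
        + (d₁ + d₂) * d₁ * d₂ * m ^ 3 := by
    unfold hopfNumerator
    ring
  rw [← sub_pos, hgap]
  positivity

/-- For the growth-free system, the steady-state threshold `χ_k^S` is strictly below
the Hopf threshold `χ_k^H`. -/
theorem chiS_lt_chiH (d₁ d₂ lam ubar vbar ξ k L m χS A₁ A₂ A₃ B₁ B₂ χH : ℝ)
    (hd₁ : 0 < d₁) (hd₂ : 0 < d₂) (hlam : 0 < lam) (hu : 0 < ubar) (hv : 0 < vbar)
    (hk : 0 < k) (hL : 0 < L)
    (hξ : 0 < ξ) (hξ' : ξ < d₂ * ((k * Real.pi / L) ^ 2 + lam) / vbar)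
    (hm : m = (k * Real.pi / L) ^ 2)
    (hχS : χS = (d₁ * d₂ * (m + lam) - ξ * d₁ * vbar) / (d₂ * ubar))
    (hA₁ : A₁ = m + lam) (hA₂ : A₂ = (d₁ + d₂) * m) (hA₃ : A₃ = d₁ * d₂ * m ^ 2)
    (hB₁ : B₁ = (d₁ + 1) * ubar * m ^ 2 + lam * ubar * m)
    (hB₂ : B₂ = (d₂ + 1) * vbar * m ^ 2 + lam * vbar * m)
    (hχH : χH = (A₁ * A₂ ^ 2 + A₁ ^ 2 * A₂ + A₂ * A₃ - ξ * B₂) / B₁) :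
    χS < χH := by
  have hm₀ : 0 < m := by rw [hm]; positivity
  have hξ_mem : ξ ∈ Set.Icc 0 (d₂ * (m + lam) / vbar) := ⟨hξ.le, hm ▸ hξ'.le⟩
  have hN₁ := mul_lt_hopfNumerator hd₁ hd₂ hm₀ hlam
  have hN₂ := mul_lt_hopfNumerator hd₂ hd₁ hm₀ hlam
  rw [← hopfNumerator_comm] at hN₂
  have hN : A₁ * A₂ ^ 2 + A₁ ^ 2 * A₂ + A₂ * A₃ = hopfNumerator d₁ d₂ m lam := by
    rw [hA₁, hA₂, hA₃, hopfNumerator]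
  subst hχS hχH hB₁ hB₂ hA₁
  rw [hN, div_lt_div_iff₀ (by positivity) (by positivity)]
  have hgap := pos_of_affine_pos_of_mem_Icc hξ_mem
    (c₀ := d₂ * ubar * hopfNumerator d₁ d₂ m lam
      - d₁ * d₂ * (m + lam) * ((d₁ + 1) * ubar * m ^ 2 + lam * ubar * m))
    (c₁ := d₁ * vbar * ((d₁ + 1) * ubar * m ^ 2 + lam * ubar * m)
      - d₂ * ubar * ((d₂ + 1) * vbar * m ^ 2 + lam * vbar * m))
    (by linarith [mul_pos (mul_pos hd₂ hu) (sub_pos.2 hN₁)])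
    (by field_simp; linarith [mul_pos (mul_pos hd₂ hu) (sub_pos.2 hN₂)])
  linarith
end
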